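/- arXiv:0705.0808 — 2 statements merged into one kernel-verified Lean document; each statement's English description precedes it below -/
import Mathlib

section
/- Let Ω_Λ be a finite set and let H, H' : Ω_Λ → ℝ be two functions (Hamiltonians). Let γ and γ' be the Boltzmann–Gibbs probability measures on Ω_Λ defined by γ(ξ) = exp(−H(ξ))/Z and γ'(ξ) = exp(−H'(ξ))/Z' with Z, Z' the corresponding normalizing constants. Then for any bounded function h : Ω_Λ → ℝ, |E_γ[h] − E_{γ'}[h]| ≤ ‖h‖_∞ · sup_ξ |H(ξ) − H'(ξ)|. -/
open scoped BigOperators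

/-- Expectation of `h` under the Boltzmann–Gibbs measure with Hamiltonian `H` on a
finite set: `E[h] = (Σ_ξ h ξ exp(-H ξ)) / Σ_ξ exp(-H ξ)`. -/
noncomputable def gibbsExp {Ω : Type} [Fintype Ω] (H h : Ω → ℝ) : ℝ :=
  (∑ ξ : Ω, h ξ * Real.exp (-H ξ)) / (∑ ξ : Ω, Real.exp (-H ξ))

lemma cov_bound {Ω : Type} [Fintype Ω] [Nonempty Ω] (h g w : Ω → ℝ)
    (hw : ∀ ξ, 0 < w ξ) {M δ : ℝ} (hδ : 0 < δ)
    (hM : ∀ ξ, |h ξ| ≤ M) (hg : ∀ ξ, |g ξ| ≤ δ) :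
    |(∑ ξ : Ω, h ξ * g ξ * w ξ) * (∑ ξ : Ω, w ξ) -
      (∑ ξ : Ω, h ξ * w ξ) * (∑ ξ : Ω, g ξ * w ξ)|
      ≤ M * δ * (∑ ξ : Ω, w ξ)^2 := by
  set W := ∑ ξ : Ω, w ξ with hWdef
  have hW : 0 < W := Finset.sum_pos (fun ξ _ => hw ξ) Finset.univ_nonempty
  set μ := (∑ ξ : Ω, g ξ * w ξ) / W with hμdef
  have hμW : μ * W = ∑ ξ : Ω, g ξ * w ξ := div_mul_cancel₀ _ hW.ne'
  have hμ : |μ| ≤ δ := by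
    rw [hμdef, abs_div, abs_of_pos hW, div_le_iff₀ hW]
    calc |∑ ξ : Ω, g ξ * w ξ| ≤ ∑ ξ : Ω, |g ξ * w ξ| := Finset.abs_sum_le_sum_abs _ _
      _ ≤ ∑ ξ : Ω, δ * w ξ := by
          refine Finset.sum_le_sum fun ξ _ => ?_
          rw [abs_mul, abs_of_pos (hw ξ)]
          exact mul_le_mul_of_nonneg_right (hg ξ) (hw ξ).le
      _ = δ * W := by rw [hWdef, Finset.mul_sum]
  have hμl : -δ ≤ μ := (abs_le.mp hμ).1
  have hμr : μ ≤ δ := (abs_le.mp hμ).2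
  -- identity
  have hid : (∑ ξ : Ω, h ξ * (g ξ - μ) * w ξ) * W =
      (∑ ξ : Ω, h ξ * g ξ * w ξ) * W - (∑ ξ : Ω, h ξ * w ξ) * (∑ ξ : Ω, g ξ * w ξ) := by
    have h1 : ∑ ξ : Ω, h ξ * (g ξ - μ) * w ξ =
        (∑ ξ : Ω, h ξ * g ξ * w ξ) - μ * (∑ ξ : Ω, h ξ * w ξ) := by
      rw [Finset.mul_sum, ← Finset.sum_sub_distrib]
      exact Finset.sum_congr rfl fun ξ _ => by ring
    rw [h1, sub_mul, ← hμW]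
    ring
  -- bound on ∑ |g - μ| * w
  have habs : ∀ ξ : Ω, |g ξ - μ| = 2 * max (g ξ - μ) 0 - (g ξ - μ) := by
    intro ξ
    rcases le_total (g ξ - μ) 0 with hc | hc
    · rw [max_eq_right hc, abs_of_nonpos hc]; ring
    · rw [max_eq_left hc, abs_of_nonneg hc]; ring
  have hchord : ∀ ξ : Ω, max (g ξ - μ) 0 ≤ (δ - μ) * (g ξ + δ) / (2 * δ) := by
    intro ξ
    have hgl : -δ ≤ g ξ := (abs_le.mp (hg ξ)).1
    have hgr : g ξ ≤ δ := (abs_le.mp (hg ξ)).2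
    rw [max_le_iff]
    refine ⟨?_, div_nonneg (mul_nonneg (by linarith) (by linarith)) (by linarith)⟩
    rw [le_div_iff₀ (by linarith)]
    nlinarith [mul_nonneg (sub_nonneg.mpr hgr) (by linarith : (0:ℝ) ≤ δ + μ)]
  have hsum : ∑ ξ : Ω, |g ξ - μ| * w ξ ≤ δ * W := by
    have e1 : ∑ ξ : Ω, |g ξ - μ| * w ξ = 2 * ∑ ξ : Ω, max (g ξ - μ) 0 * w ξ := by
      have : ∑ ξ : Ω, |g ξ - μ| * w ξ =
          (∑ ξ : Ω, 2 * (max (g ξ - μ) 0 * w ξ)) - (∑ ξ : Ω, (g ξ - μ) * w ξ) := by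
        rw [← Finset.sum_sub_distrib]
        exact Finset.sum_congr rfl fun ξ _ => by rw [habs ξ]; ring
      have e2 : ∑ ξ : Ω, (g ξ - μ) * w ξ = 0 := by
        have : ∑ ξ : Ω, (g ξ - μ) * w ξ = (∑ ξ : Ω, g ξ * w ξ) - μ * W := by
          rw [Finset.mul_sum, ← Finset.sum_sub_distrib]
          exact Finset.sum_congr rfl fun ξ _ => by ring
        rw [this, hμW, sub_self]
      rw [this, e2, sub_zero, ← Finset.mul_sum]
    rw [e1]
    have e3 : ∑ ξ : Ω, max (g ξ - μ) 0 * w ξ ≤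
        ∑ ξ : Ω, ((δ - μ) * (g ξ + δ) / (2 * δ)) * w ξ :=
      Finset.sum_le_sum fun ξ _ => mul_le_mul_of_nonneg_right (hchord ξ) (hw ξ).le
    have e4 : ∑ ξ : Ω, ((δ - μ) * (g ξ + δ) / (2 * δ)) * w ξ =
        (δ - μ) / (2 * δ) * ((∑ ξ : Ω, g ξ * w ξ) + δ * W) := by
      simp only [hWdef, Finset.mul_sum, mul_add, ← Finset.sum_add_distrib]
      exact Finset.sum_congr rfl fun ξ _ => by field_simp
    have e5 : (δ - μ) / (2 * δ) * ((∑ ξ : Ω, g ξ * w ξ) + δ * W) ≤ δ / 2 * W := by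
      rw [← hμW]
      have key : (δ - μ) * (μ + δ) ≤ δ * δ := by nlinarith [sq_nonneg μ]
      rw [div_mul_eq_mul_div, div_le_iff₀ (by linarith : (0:ℝ) < 2 * δ)]
      have : (δ - μ) * (μ * W + δ * W) = ((δ - μ) * (μ + δ)) * W := by ring
      rw [this]
      calc ((δ - μ) * (μ + δ)) * W ≤ (δ * δ) * W :=
            mul_le_mul_of_nonneg_right key hW.le
        _ = δ / 2 * W * (2 * δ) := by ring
    linarith
  -- combine
  have hfin : |∑ ξ : Ω, h ξ * (g ξ - μ) * w ξ| ≤ M * (δ * W) := by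
    calc |∑ ξ : Ω, h ξ * (g ξ - μ) * w ξ| ≤ ∑ ξ : Ω, |h ξ * (g ξ - μ) * w ξ| :=
          Finset.abs_sum_le_sum_abs _ _
      _ ≤ ∑ ξ : Ω, M * (|g ξ - μ| * w ξ) := by
          refine Finset.sum_le_sum fun ξ _ => ?_
          rw [abs_mul, abs_mul, abs_of_pos (hw ξ), mul_assoc]
          have hM0 : 0 ≤ M := (abs_nonneg _).trans (hM ξ)
          exact mul_le_mul_of_nonneg_right (hM ξ)
            (mul_nonneg (abs_nonneg _) (hw ξ).le)
      _ = M * ∑ ξ : Ω, |g ξ - μ| * w ξ := by rw [Finset.mul_sum]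
      _ ≤ M * (δ * W) := by
          have hM0 : 0 ≤ M := (abs_nonneg _).trans (hM (Classical.arbitrary Ω))
          exact mul_le_mul_of_nonneg_left hsum hM0
  calc |(∑ ξ : Ω, h ξ * g ξ * w ξ) * W - (∑ ξ : Ω, h ξ * w ξ) * (∑ ξ : Ω, g ξ * w ξ)|
      = |∑ ξ : Ω, h ξ * (g ξ - μ) * w ξ| * W := by
        rw [← hid, abs_mul, abs_of_pos hW]
    _ ≤ M * (δ * W) * W := mul_le_mul_of_nonneg_right hfin hW.le
    _ = M * δ * W ^ 2 := by ring

/-- for Hamiltonians `H, H'` on a nonempty finite set and any bounded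
function `h`, `|E_γ[h] - E_γ'[h]| ≤ ‖h‖_∞ · sup_ξ |H ξ - H' ξ|`. -/
theorem gibbs_exp_diff_le {Ω : Type} [Fintype Ω] [Nonempty Ω] (H H' h : Ω → ℝ) :
    |gibbsExp H h - gibbsExp H' h| ≤ (⨆ ξ : Ω, |h ξ|) * ⨆ ξ : Ω, |H ξ - H' ξ| := by
  have hMle : ∀ ξ : Ω, |h ξ| ≤ ⨆ ξ : Ω, |h ξ| := fun ξ =>
    le_ciSup (f := fun ξ : Ω => |h ξ|) (Set.Finite.bddAbove (Set.finite_range _)) ξ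
  have hδle : ∀ ξ : Ω, |H ξ - H' ξ| ≤ ⨆ ξ : Ω, |H ξ - H' ξ| := fun ξ =>
    le_ciSup (f := fun ξ : Ω => |H ξ - H' ξ|) (Set.Finite.bddAbove (Set.finite_range _)) ξ
  set M := ⨆ ξ : Ω, |h ξ| with hMdef
  set δ := ⨆ ξ : Ω, |H ξ - H' ξ| with hδdef
  have hδ0 : 0 ≤ δ := (abs_nonneg _).trans (hδle (Classical.arbitrary Ω))
  rcases eq_or_lt_of_le hδ0 with hδz | hδ
  · -- δ = 0 : H = H'
    have hHH : H = H' := funext fun ξ => by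
      have h1 := hδle ξ
      rw [← hδz] at h1
      have := abs_nonpos_iff.mp (le_antisymm h1 (abs_nonneg _)).le
      linarith [sub_eq_zero.mp this]
    rw [hHH, sub_self, abs_zero, ← hδz, mul_zero]
  · set g := fun ξ : Ω => H ξ - H' ξ with hgdef
    have hgle : ∀ ξ : Ω, |g ξ| ≤ δ := fun ξ => hδle ξ
    set N := fun t : ℝ => ∑ ξ : Ω, h ξ * Real.exp (-(H' ξ + t * g ξ)) with hNdef
    set D := fun t : ℝ => ∑ ξ : Ω, Real.exp (-(H' ξ + t * g ξ)) with hDdef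
    have hDpos : ∀ t : ℝ, 0 < D t := fun t =>
      Finset.sum_pos (fun ξ _ => Real.exp_pos _) Finset.univ_nonempty
    set N' := fun t : ℝ => ∑ ξ : Ω, h ξ * (Real.exp (-(H' ξ + t * g ξ)) * -(1 * g ξ)) with hN'def
    set D' := fun t : ℝ => ∑ ξ : Ω, Real.exp (-(H' ξ + t * g ξ)) * -(1 * g ξ) with hD'def
    have hNd : ∀ t : ℝ, HasDerivAt N (N' t) t := fun t =>
      HasDerivAt.fun_sum fun ξ _ =>
        (((((hasDerivAt_id t).mul_const (g ξ)).const_add (H' ξ)).neg).exp).const_mul (h ξ)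
    have hDd : ∀ t : ℝ, HasDerivAt D (D' t) t := fun t =>
      HasDerivAt.fun_sum fun ξ _ =>
        ((((hasDerivAt_id t).mul_const (g ξ)).const_add (H' ξ)).neg).exp
    have hFd : ∀ t : ℝ, HasDerivAt (fun t => N t / D t)
        ((N' t * D t - N t * D' t) / D t ^ 2) t := fun t =>
      (hNd t).div (hDd t) (hDpos t).ne'
    obtain ⟨c, _, hceq⟩ := exists_hasDerivAt_eq_slope (fun t => N t / D t)
      (fun t => (N' t * D t - N t * D' t) / D t ^ 2) one_pos
      (fun t _ => (hFd t).continuousAt.continuousWithinAt)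
      (fun t _ => hFd t)
    have h1 : gibbsExp H h = N 1 / D 1 := by
      unfold gibbsExp
      rw [hNdef, hDdef]
      congr 1
      · exact Finset.sum_congr rfl fun ξ _ => by
          rw [show -(H' ξ + 1 * g ξ) = -H ξ from by simp only [hgdef]; ring]
      · exact Finset.sum_congr rfl fun ξ _ => by
          rw [show -(H' ξ + 1 * g ξ) = -H ξ from by simp only [hgdef]; ring]
    have h0 : gibbsExp H' h = N 0 / D 0 := by
      unfold gibbsExp
      rw [hNdef, hDdef]
      congr 1
      · exact Finset.sum_congr rfl fun ξ _ => by
          rw [show -(H' ξ + 0 * g ξ) = -H' ξ from by simp only [hgdef]; ring]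
      · exact Finset.sum_congr rfl fun ξ _ => by
          rw [show -(H' ξ + 0 * g ξ) = -H' ξ from by simp only [hgdef]; ring]
    have hnum : |N' c * D c - N c * D' c| ≤ M * δ * D c ^ 2 := by
      have e1 : N' c = -∑ ξ : Ω, h ξ * g ξ * Real.exp (-(H' ξ + c * g ξ)) := by
        rw [hN'def, ← Finset.sum_neg_distrib]
        exact Finset.sum_congr rfl fun ξ _ => by ring
      have e2 : D' c = -∑ ξ : Ω, g ξ * Real.exp (-(H' ξ + c * g ξ)) := by
        rw [hD'def, ← Finset.sum_neg_distrib]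
        exact Finset.sum_congr rfl fun ξ _ => by ring
      rw [e1, e2]
      rw [show (-∑ ξ : Ω, h ξ * g ξ * Real.exp (-(H' ξ + c * g ξ))) * D c -
            N c * -∑ ξ : Ω, g ξ * Real.exp (-(H' ξ + c * g ξ)) =
          -((∑ ξ : Ω, h ξ * g ξ * Real.exp (-(H' ξ + c * g ξ))) * D c -
            N c * ∑ ξ : Ω, g ξ * Real.exp (-(H' ξ + c * g ξ))) from by ring, abs_neg]
      exact cov_bound h g (fun ξ => Real.exp (-(H' ξ + c * g ξ)))
        (fun ξ => Real.exp_pos _) hδ hMle hgle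
    have hM0 : 0 ≤ M := (abs_nonneg _).trans (hMle (Classical.arbitrary Ω))
    calc |gibbsExp H h - gibbsExp H' h|
        = |(N' c * D c - N c * D' c) / D c ^ 2| := by
          have hstep : N 1 / D 1 - N 0 / D 0 = (N' c * D c - N c * D' c) / D c ^ 2 := by
            rw [hceq]; norm_num
          rw [h1, h0, hstep]
      _ = |N' c * D c - N c * D' c| / D c ^ 2 := by
          rw [abs_div, abs_of_pos (pow_pos (hDpos c) 2)]
      _ ≤ M * δ * D c ^ 2 / D c ^ 2 := by gcongr
      _ = M * δ := by rw [mul_div_assoc, div_self (pow_pos (hDpos c) 2).ne', mul_one]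
end

section
/- Let f = {f_i} be a regular left singleton-specification on Ω = A^{Z^-} and define interval kernels f_{[m,n]} = f_m f_{m+1} ⋯ f_n by composition. Define γ^f_Λ for a finite interval-containing volume by the ratio formula γ^f_Λ(σ_Λ | ω_{Λ^c}) = f_{[l_Λ,0]}(σ_Λ ω_{[l_Λ,0]∩Λ^c} | ω_{Λ_-}) / f_{[l_Λ,0]}(ω_{[l_Λ,0]∩Λ^c} | ω_{Λ_-}), where l_Λ = min Λ. Then γ^f satisfies the specification consistency property: for finite Λ ⊂ Δ, Σ_{ω_{Δ∖Λ}} γ^f_Λ(ω_Λ | ω_{Λ^c}) γ^f_Δ(ω_{Δ∖Λ} | ω_{Δ^c}) = γ^f_Δ(ω_Λ | ω_{Δ^c}). -/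
open scoped BigOperators

variable {A : Type}

/-- Override a configuration `ω` on the finite set `S` by the finite-volume
configuration `τ`. -/
def override (S : Finset ℤ) (τ : {x : ℤ // x ∈ S} → A) (ω : ℤ → A) : ℤ → A :=
  fun j => if h : j ∈ S then τ ⟨j, h⟩ else ω j

/-- The interval kernel `f_{[m,0]}` of a left singleton-specification `f`, evaluated on
the cylinder determined by `σ` on `[m,0]` with past `σ_{<m}`:
`f_{[m,0]}(σ_{[m,0]} | σ_{<m}) = Π_{j=m}^0 f_j(σ_j | σ_{<j})` (the composition
`f_m f_{m+1} ⋯ f_0` of the singleton kernels). -/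
noncomputable def intervalKer (f : ℤ → A → (ℤ → A) → ℝ) (m : ℤ) (σ : ℤ → A) : ℝ :=
  ∏ j ∈ Finset.Icc m (0 : ℤ), f j (σ j) σ

/-- The candidate specification `γ^f_Λ(ω_Λ | ω_{Λᶜ})` defined from the interval kernels
by the ratio formula
`γ^f_Λ(ω_Λ | ω_{Λᶜ}) = f_{[l_Λ,0]}(ω_Λ ω_{[l_Λ,0]∩Λᶜ} | ω_{Λ_-}) /
  f_{[l_Λ,0]}(ω_{[l_Λ,0]∩Λᶜ} | ω_{Λ_-})`, where `l_Λ = min Λ`. -/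
noncomputable def gammaF (f : ℤ → A → (ℤ → A) → ℝ) (Λ : Finset ℤ) (hΛ : Λ.Nonempty)
    [Fintype A] (ω : ℤ → A) : ℝ :=
  intervalKer f (Λ.min' hΛ) ω /
    ∑ τ : {x : ℤ // x ∈ Λ} → A, intervalKer f (Λ.min' hΛ) (override Λ τ ω)

lemma intervalKer_pos (f : ℤ → A → (ℤ → A) → ℝ)
    (hpos : ∀ (j : ℤ) (a : A) (ω : ℤ → A), 0 < f j a ω) (m : ℤ) (σ : ℤ → A) :
    0 < intervalKer f m σ :=
  Finset.prod_pos fun j _ => hpos j (σ j) σ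

lemma intervalKer_split (f : ℤ → A → (ℤ → A) → ℝ) {a b : ℤ} (h1 : a ≤ b) (h2 : b ≤ 0)
    (σ : ℤ → A) :
    intervalKer f a σ = (∏ j ∈ Finset.Icc a (b - 1), f j (σ j) σ) * intervalKer f b σ := by
  unfold intervalKer
  have hset : Finset.Icc a (0:ℤ) = Finset.Icc a (b-1) ∪ Finset.Icc b 0 := by
    ext j; simp only [Finset.mem_Icc, Finset.mem_union]; omega
  have hdisj : Disjoint (Finset.Icc a (b-1)) (Finset.Icc b (0:ℤ)) := by
    rw [Finset.disjoint_left]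
    intro j hj hj'
    simp only [Finset.mem_Icc] at hj hj'
    omega
  rw [hset, Finset.prod_union hdisj]

lemma gammaF_key [Fintype A] [Nonempty A]
    (f : ℤ → A → (ℤ → A) → ℝ)
    (hpos : ∀ (j : ℤ) (a : A) (ω : ℤ → A), 0 < f j a ω)
    (hpast : ∀ (j : ℤ) (a : A) (ω ω' : ℤ → A),
      (∀ l : ℤ, l < j → ω l = ω' l) → f j a ω = f j a ω')
    (Λ Δ : Finset ℤ) (hΛ : Λ.Nonempty) (hΔ : Δ.Nonempty) (hsub : Λ ⊆ Δ)
    (hΔ0 : ∀ i ∈ Δ, i ≤ 0) (σ : ℤ → A) :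
    gammaF f Λ hΛ σ * ∑ τ : {x : ℤ // x ∈ Λ} → A, gammaF f Δ hΔ (override Λ τ σ)
      = gammaF f Δ hΔ σ := by
  set mΛ := Λ.min' hΛ with hmΛdef
  set mΔ := Δ.min' hΔ with hmΔdef
  have hmΛΔ : mΔ ≤ mΛ := Δ.min'_le _ (hsub (Λ.min'_mem hΛ))
  have hmΛ0 : mΛ ≤ 0 := hΔ0 _ (hsub (Λ.min'_mem hΛ))
  have hΛmem : ∀ i ∈ Λ, mΛ ≤ i := fun i hi => Λ.min'_le i hi
  -- override composition collapses
  have hov : ∀ (τ : {x : ℤ // x ∈ Λ} → A) (τ' : {x : ℤ // x ∈ Δ} → A),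
      override Δ τ' (override Λ τ σ) = override Δ τ' σ := by
    intro τ τ'
    funext j
    by_cases hj : j ∈ Δ
    · simp [override, hj]
    · have hjΛ : j ∉ Λ := fun h => hj (hsub h)
      simp [override, hj, hjΛ]
  set DΔ := ∑ τ' : {x : ℤ // x ∈ Δ} → A, intervalKer f mΔ (override Δ τ' σ) with hDΔ
  set DΛ := ∑ τ : {x : ℤ // x ∈ Λ} → A, intervalKer f mΛ (override Λ τ σ) with hDΛ
  have hDΔpos : 0 < DΔ := Finset.sum_pos (fun τ' _ => intervalKer_pos f hpos _ _)
    Finset.univ_nonempty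
  have hDΛpos : 0 < DΛ := Finset.sum_pos (fun τ _ => intervalKer_pos f hpos _ _)
    Finset.univ_nonempty
  set Klow := ∏ j ∈ Finset.Icc mΔ (mΛ - 1), f j (σ j) σ with hKlow
  -- low part invariant under override on Λ
  have hlow : ∀ τ : {x : ℤ // x ∈ Λ} → A,
      (∏ j ∈ Finset.Icc mΔ (mΛ - 1), f j ((override Λ τ σ) j) (override Λ τ σ)) = Klow := by
    intro τ
    apply Finset.prod_congr rfl
    intro j hj
    simp only [Finset.mem_Icc] at hj
    have hjΛ : j ∉ Λ := fun h => by have := hΛmem j h; omega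
    have hval : (override Λ τ σ) j = σ j := dif_neg hjΛ
    rw [hval]
    apply hpast
    intro l hl
    have hlΛ : l ∉ Λ := fun h => by have := hΛmem l h; omega
    exact dif_neg hlΛ
  have hsplitσ : intervalKer f mΔ σ = Klow * intervalKer f mΛ σ :=
    intervalKer_split f hmΛΔ hmΛ0 σ
  have hterm : ∀ τ : {x : ℤ // x ∈ Λ} → A,
      gammaF f Δ hΔ (override Λ τ σ)
        = Klow * intervalKer f mΛ (override Λ τ σ) / DΔ := by
    intro τ
    unfold gammaF
    rw [← hmΔdef]
    congr 1
    · rw [intervalKer_split f hmΛΔ hmΛ0 (override Λ τ σ), hlow τ]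
    · rw [hDΔ]
      exact Finset.sum_congr rfl fun τ' _ => by rw [hov τ τ']
  have hsum : (∑ τ : {x : ℤ // x ∈ Λ} → A, gammaF f Δ hΔ (override Λ τ σ))
      = Klow * DΛ / DΔ := by
    rw [Finset.sum_congr rfl fun τ _ => hterm τ]
    rw [hDΛ, Finset.mul_sum, ← Finset.sum_div]
  rw [hsum]
  show intervalKer f mΛ σ / DΛ * (Klow * DΛ / DΔ) = intervalKer f mΔ σ / DΔ
  rw [hsplitσ]
  field_simp

/-- for a regular (continuous and strictly positive) left
singleton-specification `f` on `A^{ℤ^-}`, the family `γ^f` defined by the ratio formula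
satisfies the specification consistency property: for finite `Λ ⊆ Δ` (of sites `≤ 0`),
`Σ_{ω_{Δ∖Λ}} γ^f_Λ(ω_Λ | ω_{Λᶜ}) γ^f_Δ(ω_{Δ∖Λ} | ω_{Δᶜ}) = γ^f_Δ(ω_Λ | ω_{Δᶜ})`. -/
theorem gammaF_consistency {A : Type} [Fintype A] [Nonempty A]
    [TopologicalSpace A] [DiscreteTopology A]
    (f : ℤ → A → (ℤ → A) → ℝ)
    (hpos : ∀ (j : ℤ) (a : A) (ω : ℤ → A), 0 < f j a ω)
    (hprob : ∀ (j : ℤ) (ω : ℤ → A), ∑ a : A, f j a ω = 1)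
    (hpast : ∀ (j : ℤ) (a : A) (ω ω' : ℤ → A),
      (∀ l : ℤ, l < j → ω l = ω' l) → f j a ω = f j a ω')
    (hcont : ∀ (j : ℤ) (a : A), Continuous (f j a))
    (Λ Δ : Finset ℤ) (hΛ : Λ.Nonempty) (hΔ : Δ.Nonempty) (hsub : Λ ⊆ Δ)
    (hΔ0 : ∀ i ∈ Δ, i ≤ 0) (ω : ℤ → A) :
    ∑ η : {x : ℤ // x ∈ Δ \ Λ} → A,
      gammaF f Λ hΛ (override (Δ \ Λ) η ω) *
        ∑ τ : {x : ℤ // x ∈ Λ} → A,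
          gammaF f Δ hΔ (override Λ τ (override (Δ \ Λ) η ω)) =
      ∑ η : {x : ℤ // x ∈ Δ \ Λ} → A, gammaF f Δ hΔ (override (Δ \ Λ) η ω) := by
  exact Finset.sum_congr rfl fun η _ =>
    gammaF_key f hpos hpast Λ Δ hΛ hΔ hsub hΔ0 (override (Δ \ Λ) η ω)
end
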